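/- Let Q and B be real n×n matrices with Q symmetric positive semidefinite, and let f_X(t) = ∫₀ᵗ |Q^{1/2} e^{sBᵀ} X|² ds for X ∈ ℝⁿ. Then for every integer k ≥ 0 and every X ∈ ℝⁿ: the derivatives f_X^{(l)}(0) vanish for all 0 ≤ l ≤ 2k+1 if and only if X belongs to the intersection of the kernels Ker(Q^{1/2}(Bᵀ)ʲ) for j = 0,...,k. -/

import Mathlib

open Matrix intervalIntegral

/-- The square root of a positive semidefinite matrix, as defined in Mathlib (Dec 2024). -/
noncomputable def Matrix.PosSemidef.sqrt {n : Type*} [Fintype n] [DecidableEq n]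
    {A : Matrix n n ℝ} (hA : A.PosSemidef) : Matrix n n ℝ :=
  hA.1.eigenvectorUnitary.1 * diagonal ((↑) ∘ (fun x => √x) ∘ hA.1.eigenvalues) *
    (star hA.1.eigenvectorUnitary : Matrix n n ℝ)

/-!
Write `v m = Q^{1/2} (Bᵀ)^m X` and `u m s = Q^{1/2} (Bᵀ)^m e^{sBᵀ} X`, so that `u m` has
derivative `u (m + 1)` and `u m 0 = v m`. Since `f_X(0) = 0` and `f_X' = ⟨u 0, u 0⟩`, Leibniz's rule
gives `f_X^{(l+1)}(0) = ∑_{m ≤ l} C(l, m) ⟨v m, v (l - m)⟩`. If `v 0 = ⋯ = v k = 0`, each of these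
terms with `l ≤ 2k` vanishes because `m ≤ k` or `l - m ≤ k`. Conversely, once `v 0, …, v (j - 1)`
vanish, the derivative of order `2j + 1` reduces to `C(2j, j) |v j|²`, which forces `v j = 0`.
-/

open Finset NormedSpace

section Leibniz

variable {𝕜 ι : Type*} [NontriviallyNormedField 𝕜] [Fintype ι]

theorem HasDerivAt.dotProduct {u v : 𝕜 → ι → 𝕜} {u' v' : ι → 𝕜} {t : 𝕜}
    (hu : HasDerivAt u u' t) (hv : HasDerivAt v v' t) :
    HasDerivAt (fun s => u s ⬝ᵥ v s) (u' ⬝ᵥ v t + u t ⬝ᵥ v') t :=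
  (HasDerivAt.fun_sum (u := univ) fun i _ =>
    (hasDerivAt_pi.1 hu i).fun_mul (hasDerivAt_pi.1 hv i)).congr_deriv <| by
      rw [sum_add_distrib]; rfl

theorem iteratedDeriv_dotProduct_of_hasDerivAt {u v : ℕ → 𝕜 → ι → 𝕜}
    (hu : ∀ m t, HasDerivAt (u m) (u (m + 1) t) t) (hv : ∀ m t, HasDerivAt (v m) (v (m + 1) t) t)
    (l : ℕ) :
    iteratedDeriv l (fun t => u 0 t ⬝ᵥ v 0 t) =
      fun t => ∑ m ∈ range (l + 1), (l.choose m : 𝕜) * (u m t ⬝ᵥ v (l - m) t) := by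
  induction l with
  | zero => simp
  | succ l ih =>
    funext t
    have H := HasDerivAt.fun_sum (u := range (l + 1)) fun m _ =>
      ((hu m t).dotProduct (hv (l - m) t)).const_mul (l.choose m : 𝕜)
    rw [iteratedDeriv_succ, ih, H.deriv, sum_choose_succ_mul (fun i j => u i t ⬝ᵥ v j t)]
    simp only [mul_add, sum_add_distrib]
    rw [add_comm]
    congr 1
    refine sum_congr rfl fun m hm => ?_
    rw [Nat.sub_add_comm (Nat.lt_succ_iff.1 (mem_range.1 hm))]

end Leibniz

theorem iteratedDeriv_succ_integral {E : Type*} [NormedAddCommGroup E] [NormedSpace ℝ E]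
    [CompleteSpace E] {g : ℝ → E} (hg : Continuous g) (a : ℝ) (l : ℕ) :
    iteratedDeriv (l + 1) (fun t => ∫ s in a..t, g s) = iteratedDeriv l g := by
  rw [iteratedDeriv_succ']
  congr 1
  funext t
  exact hg.deriv_integral g a t

theorem forall_sum_choose_mul_dotProduct_eq_zero_iff {ι R : Type*} [Fintype ι] [CommRing R]
    [LinearOrder R] [IsStrictOrderedRing R] (v : ℕ → ι → R) (k : ℕ) :
    (∀ l ≤ 2 * k, ∑ m ∈ range (l + 1), (l.choose m : R) * (v m ⬝ᵥ v (l - m)) = 0) ↔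
      ∀ j ≤ k, v j = 0 := by
  constructor
  · intro h j
    induction j using Nat.strong_induction_on with
    | _ j ih =>
    intro hj
    have hcentral : ∑ m ∈ range (2 * j + 1), ((2 * j).choose m : R) * (v m ⬝ᵥ v (2 * j - m)) =
        ((2 * j).choose j : R) * (v j ⬝ᵥ v j) := by
      rw [sum_eq_single j]
      · rw [show 2 * j - j = j by omega]
      · intro m hm hmj
        rcases lt_or_gt_of_ne hmj with hlt | hgt
        · rw [ih m hlt (by omega), zero_dotProduct, mul_zero]
        · rw [ih (2 * j - m) (by rw [mem_range] at hm; omega) (by omega), dotProduct_zero, mul_zero]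
      · intro hj'; exact absurd (mem_range.mpr (by omega)) hj'
    have hchoose : ((2 * j).choose j : R) ≠ 0 := by
      exact_mod_cast (Nat.choose_pos (by omega)).ne'
    rw [← dotProduct_self_eq_zero]
    simpa [hcentral, hchoose] using h (2 * j) (by omega)
  · intro h l hl
    refine sum_eq_zero fun m hm => ?_
    rcases le_or_gt m k with hmk | hmk
    · rw [h m hmk, zero_dotProduct, mul_zero]
    · rw [h (l - m) (by omega), dotProduct_zero, mul_zero]

section MatrixExp

variable {ι : Type*} [Fintype ι] [DecidableEq ι]

theorem hasDerivAt_mul_exp_smul_mulVec (C M : Matrix ι ι ℝ) (X : ι → ℝ) (s : ℝ) :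
    HasDerivAt (fun s : ℝ => (C * exp (s • M)) *ᵥ X) ((C * M * exp (s • M)) *ᵥ X) s := by
  -- matrices carry no global norm; any norm will do to differentiate the exponential
  let _ : NormedRing (Matrix ι ι ℝ) := Matrix.linftyOpNormedRing
  let _ : NormedAlgebra ℝ (Matrix ι ι ℝ) := Matrix.linftyOpNormedAlgebra
  let L : Matrix ι ι ℝ →ₗ[ℝ] ι → ℝ :=
    { toFun := fun P => (C * P) *ᵥ X
      map_add' := fun P P' => by simp only [Matrix.mul_add, add_mulVec]
      map_smul' := fun a P => by simp only [Matrix.mul_smul, smul_mulVec, RingHom.id_apply] }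
  have hexp : HasDerivAt (fun s : ℝ => exp (s • M)) (M * exp (s • M)) s :=
    hasDerivAt_exp_smul_const' M s
  rw [Matrix.mul_assoc]
  exact L.toContinuousLinearMap.hasFDerivAt.comp_hasDerivAt s hexp

theorem hasDerivAt_mul_pow_mul_exp_smul_mulVec (A M : Matrix ι ι ℝ) (X : ι → ℝ) (m : ℕ) (s : ℝ) :
    HasDerivAt (fun s : ℝ => (A * M ^ m * exp (s • M)) *ᵥ X)
      ((A * M ^ (m + 1) * exp (s • M)) *ᵥ X) s := by
  rw [pow_succ, ← Matrix.mul_assoc]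
  exact hasDerivAt_mul_exp_smul_mulVec _ M X s

theorem iteratedDeriv_succ_integral_dotProduct_mulVec_exp_smul_zero (A M : Matrix ι ι ℝ)
    (X : ι → ℝ) (l : ℕ) :
    iteratedDeriv (l + 1)
        (fun t : ℝ => ∫ s in (0:ℝ)..t, (A *ᵥ exp (s • M) *ᵥ X) ⬝ᵥ (A *ᵥ exp (s • M) *ᵥ X)) 0 =
      ∑ m ∈ range (l + 1), (l.choose m : ℝ) * ((A * M ^ m) *ᵥ X ⬝ᵥ (A * M ^ (l - m)) *ᵥ X) := by
  set u : ℕ → ℝ → ι → ℝ := fun m s => (A * M ^ m * exp (s • M)) *ᵥ X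
  have hu : ∀ m s, HasDerivAt (u m) (u (m + 1) s) s :=
    hasDerivAt_mul_pow_mul_exp_smul_mulVec A M X
  have hu0 : ∀ s : ℝ, A *ᵥ exp (s • M) *ᵥ X = u 0 s := fun s => by
    simp only [u, pow_zero, Matrix.mul_one, mulVec_mulVec]
  have hcont : Continuous fun s => u 0 s ⬝ᵥ u 0 s :=
    continuous_iff_continuousAt.2 fun s => ((hu 0 s).dotProduct (hu 0 s)).continuousAt
  simp only [hu0, iteratedDeriv_succ_integral hcont, iteratedDeriv_dotProduct_of_hasDerivAt hu hu,
    u, zero_smul, exp_zero, Matrix.mul_one]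

end MatrixExp

/-- with `f_X(t) = ∫₀ᵗ |Q^{1/2} e^{sBᵀ} X|² ds`, for every `k ≥ 0` and every
`X ∈ ℝⁿ`, the derivatives `f_X^{(l)}(0)` vanish for all `0 ≤ l ≤ 2k+1` if and only if `X`
belongs to `⋂_{j=0}^{k} Ker (Q^{1/2}(Bᵀ)ʲ)`. -/
theorem stmt1 {n : ℕ} (Q B : Matrix (Fin n) (Fin n) ℝ) (hQ : Q.PosSemidef) :
    ∀ (k : ℕ) (X : Fin n → ℝ),
      (∀ l ≤ 2 * k + 1,
          iteratedDeriv l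
            (fun t : ℝ => ∫ s in (0:ℝ)..t,
              (hQ.sqrt.mulVec ((NormedSpace.exp (s • Bᵀ)).mulVec X)) ⬝ᵥ
                (hQ.sqrt.mulVec ((NormedSpace.exp (s • Bᵀ)).mulVec X))) 0 = 0) ↔
        (∀ j ≤ k, (hQ.sqrt * Bᵀ ^ j).mulVec X = 0) := by
  intro k X
  rw [← forall_sum_choose_mul_dotProduct_eq_zero_iff (fun j => (hQ.sqrt * Bᵀ ^ j) *ᵥ X) k]
  constructor
  · intro h l hl
    rw [← iteratedDeriv_succ_integral_dotProduct_mulVec_exp_smul_zero]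
    exact h (l + 1) (by omega)
  · rintro h (_ | l) hl
    · simp
    · rw [iteratedDeriv_succ_integral_dotProduct_mulVec_exp_smul_zero]
      exact h l (by omega)
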